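/- Let a, b, c be real numbers with a > 0, b > 0 and c > −min{1/2, a, b}. Then the Selberg integral S_{2,2}(a,b,c) := ∫_{0}^{1} ∫_{0}^{1} t₁^{a−1} t₂^{a−1} (1−t₁)^{b−1} (1−t₂)^{b−1} |t₂−t₁|^{2c} dt₁ dt₂ is finite. -/

import Mathlib

/-!
Write the integrand as `w(u) w(v) |v - u|^(2c)` with the Beta weight `w(x) = x^(a-1) (1-x)^(b-1)`.
Since `|v - u| ≤ 1`, replacing `c` by `min c 0` only enlarges the integrand off the (null)
diagonal, so we may assume `c ≤ 0`.

Near the diagonal, `|v - u| < u(1-u)/2`, the weight `w(v)` is comparable to `w(u)`, and a small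
power `s` of the singularity is traded for `(u(1-u))^s`: the integrand is then bounded by
`W(u) |v - u|^(2c-s)` with `W` an integrable Beta weight, which is a convolution integrand.
Away from the diagonal, `|v - u|` dominates `u` and `v` (or `1-u` and `1-v`) up to a factor `5`,
so `|v - u|^(2c) ≤ 25^(-c) (uv)^c` (or the same with `1-u`, `1-v`), and the integrand is bounded
by a product of two one-variable Beta weights, integrable because `c > -a` (or `c > -b`).
-/

open MeasureTheory Set Real

noncomputable def betaWeight (p q x : ℝ) : ℝ := x ^ p * (1 - x) ^ q

@[fun_prop]
lemma measurable_betaWeight (p q : ℝ) : Measurable (betaWeight p q) := by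
  unfold betaWeight; fun_prop

lemma betaWeight_nonneg (p q : ℝ) {x : ℝ} (hx : x ∈ Ioo (0 : ℝ) 1) :
    0 ≤ betaWeight p q x :=
  mul_nonneg (rpow_nonneg hx.1.le p) (rpow_nonneg (sub_nonneg.2 hx.2.le) q)

lemma betaWeight_mul (p q p' q' : ℝ) {x : ℝ} (hx : x ∈ Ioo (0 : ℝ) 1) :
    betaWeight p q x * betaWeight p' q' x = betaWeight (p + p') (q + q') x := by
  simp only [betaWeight, rpow_add hx.1, rpow_add (sub_pos.2 hx.2)]
  ring

lemma integrableOn_betaWeight {p q : ℝ} (hp : -1 < p) (hq : -1 < q) :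
    IntegrableOn (betaWeight p q) (Ioo 0 1) := by
  have hleft : IntegrableOn (betaWeight p q) (Icc 0 (1 / 2)) := by
    have h : IntegrableOn (fun x : ℝ => x ^ p) (Icc 0 (1 / 2)) := by
      rw [integrableOn_Icc_iff_integrableOn_Ioo]
      exact (intervalIntegral.integrableOn_Ioo_rpow_iff (by norm_num)).2 hp
    refine h.mul_continuousOn ?_ isCompact_Icc
    exact (continuousOn_const.sub continuousOn_id).rpow_const
      fun x hx => Or.inl (by linarith [hx.2] : (0 : ℝ) < 1 - x).ne'
  have hright : IntegrableOn (betaWeight p q) (Icc (1 / 2) 1) := by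
    have h : IntegrableOn (fun x : ℝ => (1 - x) ^ q) (Icc (1 / 2) 1) := by
      have := (intervalIntegral.intervalIntegrable_rpow' hq (a := 0) (b := 1 / 2)).comp_sub_left 1
      norm_num at this
      replace := this.symm
      exact (intervalIntegrable_iff_integrableOn_Icc_of_le (by norm_num)).1 this
    refine h.continuousOn_mul ?_ isCompact_Icc
    exact continuousOn_id.rpow_const fun x hx => Or.inl (by linarith [hx.1] : (0 : ℝ) < x).ne'
  refine (hleft.union hright).mono_set fun x hx => ?_
  rcases le_total x (1 / 2) with h | h
  exacts [Or.inl ⟨hx.1.le, h⟩, Or.inr ⟨h, hx.2.le⟩]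

lemma rpow_le_two_rpow_abs_mul_rpow {x y t : ℝ} (hx : 0 < x) (hxy : x / 2 ≤ y)
    (hyx : y ≤ 2 * x) : y ^ t ≤ 2 ^ |t| * x ^ t := by
  rcases le_or_gt 0 t with ht | ht
  · calc y ^ t ≤ (2 * x) ^ t := rpow_le_rpow (by linarith) hyx ht
      _ = 2 ^ |t| * x ^ t := by rw [abs_of_nonneg ht, mul_rpow zero_le_two hx.le]
  · calc y ^ t ≤ (x / 2) ^ t := rpow_le_rpow_of_nonpos (by positivity) hxy ht.le
      _ = 2 ^ |t| * x ^ t := by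
        rw [abs_of_neg ht, div_rpow hx.le zero_le_two, rpow_neg zero_le_two, div_eq_inv_mul]

lemma betaWeight_le_of_abs_sub_lt (p q : ℝ) {x y : ℝ} (hx : x ∈ Ioo (0 : ℝ) 1)
    (hxy : |y - x| < x * (1 - x) / 2) :
    betaWeight p q y ≤ 2 ^ |p| * 2 ^ |q| * betaWeight p q x := by
  obtain ⟨hx0, hx1⟩ := hx
  have hsmall : x * (1 - x) ≤ min x (1 - x) :=
    le_min (mul_le_of_le_one_right hx0.le (by linarith))
      (mul_le_of_le_one_left (by linarith) hx1.le)
  have h := abs_lt.1 hxy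
  have hxm := min_le_left x (1 - x)
  have hxm' := min_le_right x (1 - x)
  calc betaWeight p q y = y ^ p * (1 - y) ^ q := rfl
    _ ≤ (2 ^ |p| * x ^ p) * (2 ^ |q| * (1 - x) ^ q) :=
      mul_le_mul (rpow_le_two_rpow_abs_mul_rpow (y := y) hx0 (by linarith) (by linarith))
        (rpow_le_two_rpow_abs_mul_rpow (y := 1 - y) (by linarith) (by linarith) (by linarith))
        (rpow_nonneg (by linarith) q) (by positivity)
    _ = 2 ^ |p| * 2 ^ |q| * betaWeight p q x := by unfold betaWeight; ring

lemma rpow_two_mul_le_of_le_five_mul {c d x y : ℝ} (hc : c ≤ 0) (hx : 0 < x) (hy : 0 < y)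
    (hxd : x ≤ 5 * d) (hyd : y ≤ 5 * d) :
    d ^ (2 * c) ≤ 25 ^ (-c) * (x ^ c * y ^ c) := by
  have hd : 0 < d := by linarith
  calc d ^ (2 * c) = (d * d) ^ c := by rw [two_mul, rpow_add hd, mul_rpow hd.le hd.le]
    _ ≤ (x * y / 25) ^ c := rpow_le_rpow_of_nonpos (by positivity) (by nlinarith) hc
    _ = 25 ^ (-c) * (x ^ c * y ^ c) := by
      rw [div_rpow (by positivity) (by norm_num), mul_rpow hx.le hy.le,
        rpow_neg (by norm_num), div_eq_inv_mul]

noncomputable def selbergIntegrand (p q c : ℝ) (z : ℝ × ℝ) : ℝ :=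
  betaWeight p q z.1 * betaWeight p q z.2 * |z.2 - z.1| ^ (2 * c)

@[fun_prop]
lemma measurable_selbergIntegrand (p q c : ℝ) : Measurable (selbergIntegrand p q c) := by
  unfold selbergIntegrand; fun_prop

lemma selbergIntegrand_nonneg (p q c : ℝ) {u v : ℝ} (hu : u ∈ Ioo (0 : ℝ) 1)
    (hv : v ∈ Ioo (0 : ℝ) 1) : 0 ≤ selbergIntegrand p q c (u, v) := by
  have := betaWeight_nonneg p q hu
  have := betaWeight_nonneg p q hv
  unfold selbergIntegrand; positivity

lemma selbergIntegrand_le_of_abs_sub_lt {p q c s u v : ℝ} (hs : 0 ≤ s)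
    (hu : u ∈ Ioo (0 : ℝ) 1) (hv : v ∈ Ioo (0 : ℝ) 1) (huv : u ≠ v)
    (hnear : |v - u| < u * (1 - u) / 2) :
    selbergIntegrand p q c (u, v) ≤
      2 ^ |p| * 2 ^ |q| * (betaWeight (2 * p + s) (2 * q + s) u * |v - u| ^ (2 * c - s)) := by
  have hd : 0 < |v - u| := abs_pos.2 (sub_ne_zero.2 huv.symm)
  have hwu := betaWeight_nonneg p q hu
  have hwv := betaWeight_nonneg p q hv
  have hcomp := betaWeight_le_of_abs_sub_lt p q hu hnear
  have hsplit : |v - u| ^ (2 * c) ≤ |v - u| ^ (2 * c - s) * betaWeight s s u :=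
    calc |v - u| ^ (2 * c) = |v - u| ^ (2 * c - s) * |v - u| ^ s := by
          rw [← rpow_add hd, sub_add_cancel]
      _ ≤ |v - u| ^ (2 * c - s) * (u * (1 - u)) ^ s := by
          gcongr
          linarith [mul_pos hu.1 (sub_pos.2 hu.2)]
      _ = |v - u| ^ (2 * c - s) * betaWeight s s u := by
          rw [mul_rpow hu.1.le (sub_nonneg.2 hu.2.le)]; rfl
  calc selbergIntegrand p q c (u, v)
      ≤ betaWeight p q u * (2 ^ |p| * 2 ^ |q| * betaWeight p q u) *
          (|v - u| ^ (2 * c - s) * betaWeight s s u) := by unfold selbergIntegrand; gcongr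
    _ = 2 ^ |p| * 2 ^ |q| * (betaWeight p q u * betaWeight p q u * betaWeight s s u *
          |v - u| ^ (2 * c - s)) := by ring
    _ = 2 ^ |p| * 2 ^ |q| *
        (betaWeight (2 * p + s) (2 * q + s) u * |v - u| ^ (2 * c - s)) := by
      rw [betaWeight_mul _ _ _ _ hu, betaWeight_mul _ _ _ _ hu, ← two_mul, ← two_mul]

lemma selbergIntegrand_le_of_le_abs_sub {p q c u v : ℝ} (hc : c ≤ 0)
    (hu : u ∈ Ioo (0 : ℝ) 1) (hv : v ∈ Ioo (0 : ℝ) 1) (hfar : u * (1 - u) / 2 ≤ |v - u|) :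
    selbergIntegrand p q c (u, v) ≤
      max (25 ^ (-c) * (betaWeight (p + c) q u * betaWeight (p + c) q v))
        (25 ^ (-c) * (betaWeight p (q + c) u * betaWeight p (q + c) v)) := by
  obtain ⟨hu0, hu1⟩ := hu
  obtain ⟨hv0, hv1⟩ := hv
  have hwu := betaWeight_nonneg p q ⟨hu0, hu1⟩
  have hwv := betaWeight_nonneg p q ⟨hv0, hv1⟩
  rcases le_total u (1 / 2) with hhalf | hhalf
  · have hu4 : u ≤ 4 * |v - u| := by nlinarith
    have hpow : |v - u| ^ (2 * c) ≤ 25 ^ (-c) * (u ^ c * v ^ c) :=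
      rpow_two_mul_le_of_le_five_mul hc hu0 hv0 (by linarith)
        (by linarith [le_abs_self (v - u)])
    refine le_max_of_le_left ?_
    calc selbergIntegrand p q c (u, v)
        ≤ betaWeight p q u * betaWeight p q v * (25 ^ (-c) * (u ^ c * v ^ c)) := by
          unfold selbergIntegrand; gcongr
      _ = 25 ^ (-c) * (betaWeight (p + c) q u * betaWeight (p + c) q v) := by
        simp only [betaWeight, rpow_add hu0, rpow_add hv0]; ring
  · have hu4 : 1 - u ≤ 4 * |v - u| := by nlinarith
    have hpow : |v - u| ^ (2 * c) ≤ 25 ^ (-c) * ((1 - u) ^ c * (1 - v) ^ c) :=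
      rpow_two_mul_le_of_le_five_mul hc (by linarith) (by linarith) (by linarith)
        (by linarith [neg_abs_le (v - u)])
    refine le_max_of_le_right ?_
    calc selbergIntegrand p q c (u, v)
        ≤ betaWeight p q u * betaWeight p q v *
            (25 ^ (-c) * ((1 - u) ^ c * (1 - v) ^ c)) := by unfold selbergIntegrand; gcongr
      _ = 25 ^ (-c) * (betaWeight p (q + c) u * betaWeight p (q + c) v) := by
        simp only [betaWeight, rpow_add (sub_pos.2 hu1), rpow_add (sub_pos.2 hv1)]; ring

lemma selbergIntegrand_le {p q c s u v : ℝ} (hc : c ≤ 0) (hs : 0 ≤ s)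
    (hu : u ∈ Ioo (0 : ℝ) 1) (hv : v ∈ Ioo (0 : ℝ) 1) (huv : u ≠ v) :
    selbergIntegrand p q c (u, v) ≤
      25 ^ (-c) * (betaWeight (p + c) q u * betaWeight (p + c) q v) +
      25 ^ (-c) * (betaWeight p (q + c) u * betaWeight p (q + c) v) +
      2 ^ |p| * 2 ^ |q| * (betaWeight (2 * p + s) (2 * q + s) u * |v - u| ^ (2 * c - s)) := by
  have h₁ : 0 ≤ 25 ^ (-c) * (betaWeight (p + c) q u * betaWeight (p + c) q v) := by
    have := betaWeight_nonneg (p + c) q hu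
    have := betaWeight_nonneg (p + c) q hv
    positivity
  have h₂ : 0 ≤ 25 ^ (-c) * (betaWeight p (q + c) u * betaWeight p (q + c) v) := by
    have := betaWeight_nonneg p (q + c) hu
    have := betaWeight_nonneg p (q + c) hv
    positivity
  have h₃ : 0 ≤ 2 ^ |p| * 2 ^ |q| *
      (betaWeight (2 * p + s) (2 * q + s) u * |v - u| ^ (2 * c - s)) := by
    have := betaWeight_nonneg (2 * p + s) (2 * q + s) hu
    positivity
  by_cases hnear : |v - u| < u * (1 - u) / 2
  · linarith [selbergIntegrand_le_of_abs_sub_lt (p := p) (q := q) (c := c) hs hu hv huv hnear]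
  · linarith [(selbergIntegrand_le_of_le_abs_sub (p := p) (q := q) hc hu hv
      (not_lt.1 hnear)).trans (max_le_add_of_nonneg h₁ h₂)]

lemma selbergIntegrand_anti {p q c c' u v : ℝ} (hcc : c' ≤ c) (hu : u ∈ Ioo (0 : ℝ) 1)
    (hv : v ∈ Ioo (0 : ℝ) 1) (huv : u ≠ v) :
    selbergIntegrand p q c (u, v) ≤ selbergIntegrand p q c' (u, v) := by
  have := betaWeight_nonneg p q hu
  have := betaWeight_nonneg p q hv
  have hd : |v - u| ^ (2 * c) ≤ |v - u| ^ (2 * c') :=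
    rpow_le_rpow_of_exponent_ge (abs_pos.2 (sub_ne_zero.2 huv.symm))
      (abs_le.2 ⟨by linarith [hu.2, hv.1], by linarith [hu.1, hv.2]⟩) (by linarith)
  unfold selbergIntegrand; gcongr

lemma ae_fst_ne_snd {α : Type*} [MeasurableSpace α] [MeasurableEq α] (μ ν : Measure α)
    [SFinite ν] [NullSingletonClass ν] : ∀ᵐ z ∂μ.prod ν, z.1 ≠ z.2 :=
  (Measure.ae_prod_iff_ae_ae (p := fun z : α × α => z.1 ≠ z.2)
    (measurableSet_eq_fun measurable_fst measurable_snd).compl).2 <|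
    Filter.Eventually.of_forall fun x => (ν.ae_ne x).mono fun _ hy => hy.symm

lemma IntegrableOn.mul_prod {α β : Type*} [MeasureSpace α] [MeasureSpace β]
    [SFinite (volume : Measure α)] [SFinite (volume : Measure β)]
    {f : α → ℝ} {g : β → ℝ} {s : Set α} {t : Set β}
    (hf : IntegrableOn f s) (hg : IntegrableOn g t) :
    IntegrableOn (fun z : α × β => f z.1 * g z.2) (s ×ˢ t) := by
  rw [IntegrableOn, Measure.volume_eq_prod, ← Measure.prod_restrict]
  exact hf.mul_prod hg

lemma IntegrableOn.mono_of_forall_ne {f g : ℝ × ℝ → ℝ} {s : Set ℝ} (hs : MeasurableSet s)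
    (hg : IntegrableOn g (s ×ˢ s)) (hf : Measurable f)
    (hfg : ∀ z ∈ s ×ˢ s, z.1 ≠ z.2 → ‖f z‖ ≤ g z) :
    IntegrableOn f (s ×ˢ s) := by
  refine hg.mono' hf.aestronglyMeasurable ?_
  filter_upwards [ae_restrict_mem (hs.prod hs), ae_restrict_of_ae (ae_fst_ne_snd volume volume)]
    with z hz hne using hfg z hz hne

lemma integrableOn_abs_rpow_Ioo {r : ℝ} (hr : -1 < r) :
    IntegrableOn (fun t : ℝ => |t| ^ r) (Ioo (-1) 1) := by
  have h := integrableOn_ball_of_norm_le_rpow (μ := volume) (f := fun t : ℝ => |t| ^ r)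
    (C := 1) (α := -r) (r := 1) (by simp) (by simp; linarith)
    (Filter.Eventually.of_forall fun t => by simp [abs_rpow_of_nonneg (abs_nonneg t)])
    (by fun_prop : Measurable fun t : ℝ => |t| ^ r).aestronglyMeasurable
  rwa [Real.ball_eq_Ioo, zero_sub, zero_add] at h

lemma integrableOn_mul_abs_sub_rpow {g : ℝ → ℝ} {r : ℝ} (hg : IntegrableOn g (Ioo 0 1))
    (hr : -1 < r) :
    IntegrableOn (fun z : ℝ × ℝ => g z.1 * |z.2 - z.1| ^ r) (Ioo 0 1 ×ˢ Ioo 0 1) := by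
  have h := ((integrable_indicator_iff measurableSet_Ioo).2 hg).convolution_integrand
    (ContinuousLinearMap.mul ℝ ℝ) ((integrable_indicator_iff measurableSet_Ioo).2
      (integrableOn_abs_rpow_Ioo hr)) (μ := volume) (ν := volume)
  refine (h.swap.integrableOn (s := Ioo 0 1 ×ˢ Ioo 0 1)).congr_fun (fun z hz => ?_)
    (measurableSet_Ioo.prod measurableSet_Ioo)
  obtain ⟨⟨hu0, hu1⟩, ⟨hv0, hv1⟩⟩ := hz
  have hd : z.2 - z.1 ∈ Ioo (-1 : ℝ) 1 := ⟨by linarith, by linarith⟩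
  simp [indicator_of_mem (show z.1 ∈ Ioo (0 : ℝ) 1 from ⟨hu0, hu1⟩), indicator_of_mem hd]

theorem integrableOn_selbergIntegrand_of_nonpos {p q c : ℝ} (hc : c ≤ 0) (hc' : -1 / 2 < c)
    (hp : -1 < p + c) (hq : -1 < q + c) :
    IntegrableOn (selbergIntegrand p q c) (Ioo 0 1 ×ˢ Ioo 0 1) := by
  obtain ⟨s, hs, hs'⟩ := exists_between
    (show max 0 (max (-1 - 2 * p) (-1 - 2 * q)) < 2 * c + 1 by
      simp only [max_lt_iff]; refine ⟨?_, ?_, ?_⟩ <;> linarith)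
  simp only [max_lt_iff] at hs
  have hp' : -1 < p := by linarith
  have hq' : -1 < q := by linarith
  have hprod₁ := IntegrableOn.mul_prod (integrableOn_betaWeight hp hq')
    (integrableOn_betaWeight hp hq')
  have hprod₂ := IntegrableOn.mul_prod (integrableOn_betaWeight hp' hq)
    (integrableOn_betaWeight hp' hq)
  have hdiag := integrableOn_mul_abs_sub_rpow
    (integrableOn_betaWeight (p := 2 * p + s) (q := 2 * q + s) (by linarith) (by linarith))
    (by linarith : -1 < 2 * c - s)
  refine IntegrableOn.mono_of_forall_ne measurableSet_Ioo
    (((hprod₁.const_mul (25 ^ (-c))).add (hprod₂.const_mul (25 ^ (-c)))).add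
      (hdiag.const_mul (2 ^ |p| * 2 ^ |q|))) (by fun_prop) fun ⟨u, v⟩ ⟨hu, hv⟩ huv => ?_
  rw [Real.norm_of_nonneg (selbergIntegrand_nonneg p q c hu hv)]
  exact selbergIntegrand_le hc hs.1.le hu hv huv

theorem stmt15 (a b c : ℝ) (ha : 0 < a) (hb : 0 < b)
    (hc : -min (1 / 2) (min a b) < c) :
    IntegrableOn (fun p : ℝ × ℝ =>
        p.1 ^ (a - 1) * p.2 ^ (a - 1) * (1 - p.1) ^ (b - 1) * (1 - p.2) ^ (b - 1) *
          |p.2 - p.1| ^ (2 * c))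
      ((Ioo (0 : ℝ) 1) ×ˢ (Ioo (0 : ℝ) 1)) volume := by
  rw [neg_lt, lt_min_iff, lt_min_iff] at hc
  obtain ⟨hc2, hca, hcb⟩ := hc
  have hint := integrableOn_selbergIntegrand_of_nonpos (p := a - 1) (q := b - 1)
    (min_le_right c 0) (lt_min (by linarith) (by norm_num))
    (by rcases min_choice c 0 with h | h <;> rw [h] <;> linarith)
    (by rcases min_choice c 0 with h | h <;> rw [h] <;> linarith)
  have heq : (fun p : ℝ × ℝ =>
      p.1 ^ (a - 1) * p.2 ^ (a - 1) * (1 - p.1) ^ (b - 1) * (1 - p.2) ^ (b - 1) *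
        |p.2 - p.1| ^ (2 * c)) = selbergIntegrand (a - 1) (b - 1) c := by
    funext z; simp only [selbergIntegrand, betaWeight]; ring
  rw [heq]
  refine IntegrableOn.mono_of_forall_ne measurableSet_Ioo hint (by fun_prop)
    fun ⟨u, v⟩ ⟨hu, hv⟩ huv => ?_
  rw [Real.norm_of_nonneg (selbergIntegrand_nonneg _ _ _ hu hv)]
  exact selbergIntegrand_anti (min_le_left c 0) hu hv huv
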